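/- Let d ≥ 2 and let (v,M) ∈ ℂ^d ⊕ so(d,ℂ) satisfy: v_j = 0 for 1 ≤ j ≤ d−1, v_d ≠ 0, M_{j,j+1} ≠ 0 for all 1 ≤ j ≤ d−1, and M_{j,k} = 0 for all k > j+1. If D is a diagonal matrix with diagonal entries in {−1,1} such that D v = v and D M D = M, then D is the identity matrix. (The action of the group W_d(ℂ) of diagonal sign matrices on the generic part of the relative section is free.) -/

import Mathlib

/-!
Write `D = diagonal δ`. Reading `D v = v` at the last coordinate, where `v` is nonzero, gives
`δ (d-1) = 1`; reading `D M D = M` on the superdiagonal, where `M` is nonzero, gives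
`δ j * δ (j+1) = 1`. Descending from the last index, every `δ j` is `1`.
-/

open Matrix

theorem Fin.eq_one_of_last_eq_one_of_mul_succ_eq_one {R : Type*} [Monoid R] {n : ℕ}
    (δ : Fin (n + 1) → R) (hlast : δ (Fin.last n) = 1)
    (hstep : ∀ i : Fin n, δ i.castSucc * δ i.succ = 1) : δ = 1 := by
  funext i
  induction i using Fin.reverseInduction with
  | last => exact hlast
  | cast i ih => simpa [ih] using hstep i

section

variable {R : Type*} [CommRing R] [NoZeroDivisors R] {ι : Type*} [Fintype ι] [DecidableEq ι]

theorem Matrix.diagonal_apply_eq_one_of_mulVec_eq_self {δ v : ι → R}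
    (hδv : diagonal δ *ᵥ v = v) {i : ι} (hv : v i ≠ 0) : δ i = 1 := by
  have hi := congrFun hδv i
  rw [mulVec_diagonal] at hi
  exact (mul_eq_right₀ hv).1 hi

theorem Matrix.mul_eq_one_of_diagonal_mul_mul_diagonal_eq_self {δ : ι → R}
    {M : Matrix ι ι R} (hδM : diagonal δ * M * diagonal δ = M) {i j : ι} (hM : M i j ≠ 0) :
    δ i * δ j = 1 := by
  have hij := congrFun₂ hδM i j
  rw [mul_diagonal, diagonal_mul, mul_right_comm] at hij
  exact (mul_eq_right₀ hM).1 hij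

theorem Matrix.diagonal_eq_one_of_fixes_superdiagonal {n : ℕ} {δ v : Fin (n + 1) → R}
    {M : Matrix (Fin (n + 1)) (Fin (n + 1)) R} (hv : v (Fin.last n) ≠ 0)
    (hM : ∀ i : Fin n, M i.castSucc i.succ ≠ 0)
    (hδv : diagonal δ *ᵥ v = v) (hδM : diagonal δ * M * diagonal δ = M) :
    diagonal δ = 1 := by
  rw [Fin.eq_one_of_last_eq_one_of_mul_succ_eq_one δ
    (diagonal_apply_eq_one_of_mulVec_eq_self hδv hv)
    (fun i => mul_eq_one_of_diagonal_mul_mul_diagonal_eq_self hδM (hM i))]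
  exact diagonal_one

end

/-- the action of the group `W_d(ℂ)` of diagonal sign matrices on the
generic part of the relative section is free: if `D` is diagonal with entries `±1`,
`(v, M)` lies in the generic part of the section, and `D v = v`, `D M D = M`, then
`D = 1`. (0-based indices.) -/
theorem stmt11 {d : ℕ} (hd : 2 ≤ d)
    (v : Fin d → ℂ) (M : Matrix (Fin d) (Fin d) ℂ)
    (hv2 : v ⟨d - 1, by omega⟩ ≠ 0)
    (hM1 : ∀ j k : Fin d, (k : ℕ) = (j : ℕ) + 1 → M j k ≠ 0)
    (D : Matrix (Fin d) (Fin d) ℂ)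
    (hDdiag : ∀ j k : Fin d, j ≠ k → D j k = 0)
    (hDv : D.mulVec v = v) (hDM : D * M * D = M) :
    D = 1 := by
  obtain ⟨n, rfl⟩ : ∃ n, d = n + 1 := ⟨d - 1, by omega⟩
  have hD : diagonal D.diag = D := IsDiag.diagonal_diag hDdiag
  rw [← hD] at hDv hDM ⊢
  exact diagonal_eq_one_of_fixes_superdiagonal hv2 (fun i => hM1 _ _ (by simp)) hDv hDM
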